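/- Let A be a Dedekind domain (local model: coordinate ring of a smooth affine curve), let s2 ∈ A be a nonzero element, and set B = A[z]/(z² − s2). If s2 generates a radical ideal locally at every maximal ideal (i.e., s2 has only simple zeros), then B is regular: for every maximal ideal of B, the localization of B is a discrete valuation ring. -/

import Mathlib

open Polynomial
open IsLocalRing

section Aux

lemma aux_dvr {R : Type*} [CommRing R] [IsLocalRing R] [IsNoetherianRing R] {t : R}
    (hreg : t ∈ nonZeroDivisors R) (hmax : maximalIdeal R = Ideal.span {t}) :
    ∃ hdom : IsDomain R, IsDiscreteValuationRing R := by
  have htne : t ≠ 0 := by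
    rintro rfl
    exact one_ne_zero ((mem_nonZeroDivisors_iff.mp hreg).2 1 (mul_zero 1))
  have hKrull : (⨅ n : ℕ, maximalIdeal R ^ n) = ⊥ :=
    Ideal.iInf_pow_eq_bot_of_isLocalRing _ (Ideal.IsMaximal.ne_top (maximalIdeal.isMaximal R))
  have key : ∀ x : R, x ≠ 0 → ∃ (n : ℕ) (u : R), IsUnit u ∧ x = t ^ n * u := by
    intro x hx
    have hex : ∃ n : ℕ, x ∉ maximalIdeal R ^ n := by
      by_contra h
      push_neg at h
      exact hx (by simpa [hKrull] using Ideal.mem_iInf.mpr (fun n => h n) : x ∈ (⊥ : Ideal R))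
    classical
    obtain ⟨n, hn, hmin⟩ := Nat.findX hex
    have hn0 : n ≠ 0 := by
      rintro rfl
      simp at hn
    obtain ⟨m, rfl⟩ := Nat.exists_eq_succ_of_ne_zero hn0
    have hxm : x ∈ maximalIdeal R ^ m := by
      by_contra h
      exact hmin m (Nat.lt_succ_self m) h
    rw [hmax, Ideal.span_singleton_pow, Ideal.mem_span_singleton] at hxm
    obtain ⟨u, hu⟩ := hxm
    refine ⟨m, u, ?_, hu⟩
    by_contra hunit
    apply hn
    rw [hmax, Ideal.span_singleton_pow, Ideal.mem_span_singleton, pow_succ]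
    have humem : u ∈ maximalIdeal R := by
      rwa [mem_maximalIdeal, mem_nonunits_iff]
    rw [hmax, Ideal.mem_span_singleton] at humem
    obtain ⟨v, hv⟩ := humem
    exact ⟨v, by rw [hu, hv]; ring⟩
  have hdom : IsDomain R := by
    have hnzd : NoZeroDivisors R := by
      constructor
      intro x y hxy
      by_contra h
      push_neg at h
      obtain ⟨hx, hy⟩ := h
      obtain ⟨n, u, hu, rfl⟩ := key x hx
      obtain ⟨m, v, hv, rfl⟩ := key y hy
      have h0 : t ^ (n + m) * (u * v) = 0 := by rw [pow_add]; linear_combination hxy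
      have htnm : t ^ (n + m) = 0 := by
        obtain ⟨w, hw⟩ := isUnit_iff_exists_inv.mp (hu.mul hv)
        calc t ^ (n+m) = t ^ (n+m) * (u * v) * w := by rw [mul_assoc, hw, mul_one]
          _ = 0 := by rw [h0, zero_mul]
      have hpow : t ^ (n+m) ∈ nonZeroDivisors R := pow_mem hreg _
      exact one_ne_zero ((mem_nonZeroDivisors_iff.mp hpow).2 1 (by rw [one_mul, htnm]))
    exact NoZeroDivisors.to_isDomain R
  refine ⟨hdom, ?_⟩
  have hnf : ¬ IsField R := by
    intro hf
    have := isField_iff_maximalIdeal_eq.mp hf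
    rw [hmax] at this
    exact htne (by simpa [Ideal.span_eq_bot] using this)
  have hp : (maximalIdeal R).IsPrincipal := ⟨⟨t, hmax⟩⟩
  exact ((IsDiscreteValuationRing.TFAE R hnf).out 0 4).mpr hp

lemma aux_loc {A : Type*} [CommRing A] [IsDomain A] [IsDedekindDomain A] (hA : ¬IsField A)
    {m : Ideal A} (hm : m.IsMaximal) {π : A} (hπm : π ∈ m) (hπ2 : π ∉ m ^ 2) :
    ∀ a ∈ m, ∃ u ∉ m, ∃ v, u * a = π * v := by
  classical
  haveI hmp : m.IsPrime := hm.isPrime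
  set Aₘ := Localization.AtPrime m with hAₘ
  have hbot : m ≠ ⊥ := Ring.ne_bot_of_isMaximal_of_not_isField hm hA
  haveI hdvr : IsDiscreteValuationRing Aₘ :=
    IsLocalization.AtPrime.isDiscreteValuationRing_of_dedekind_domain A hbot Aₘ
  have hπl : algebraMap A Aₘ π ∈ maximalIdeal Aₘ :=
    (IsLocalization.AtPrime.to_map_mem_maximal_iff Aₘ m π).mpr hπm
  obtain ⟨ϖ, hϖ⟩ := (IsPrincipalIdealRing.principal (maximalIdeal Aₘ)).principal
  rw [Ideal.submodule_span_eq] at hϖ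
  -- π is not in the square of the maximal ideal
  have hπsq : algebraMap A Aₘ π ∉ maximalIdeal Aₘ ^ 2 := by
    intro h
    rw [← Localization.AtPrime.map_eq_maximalIdeal, ← Ideal.map_pow] at h
    obtain ⟨⟨i, s⟩, hx⟩ := (IsLocalization.mem_map_algebraMap_iff m.primeCompl Aₘ).mp h
    rw [← map_mul] at hx
    obtain ⟨c, hc⟩ := (IsLocalization.eq_iff_exists m.primeCompl Aₘ).mp hx
    have hmem : π * (↑s * ↑c) ∈ m ^ 2 := by
      have : ↑c * (π * ↑s) = ↑c * ↑i := hc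
      have h2 : π * (↑s * ↑c) = ↑c * ↑i := by linear_combination this
      rw [h2]
      exact Ideal.mul_mem_left _ _ i.2
    have hprimary : (m ^ 2).IsPrimary :=
      Ideal.isPrimary_of_isMaximal_radical (by rw [Ideal.radical_pow m two_ne_zero, hmp.radical]; exact hm)
    rcases (Ideal.isPrimary_iff.mp hprimary).2 hmem with h1 | h2
    · exact hπ2 h1
    · rw [Ideal.radical_pow m two_ne_zero, hmp.radical] at h2
      exact (s * c).2 h2
  -- hence π generates the maximal ideal
  have hgen : maximalIdeal Aₘ = Ideal.span {algebraMap A Aₘ π} := by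
    rw [hϖ] at hπl
    obtain ⟨w, hw⟩ := Ideal.mem_span_singleton'.mp hπl
    have hwu : IsUnit w := by
      by_contra hwu
      apply hπsq
      have hwm : w ∈ maximalIdeal Aₘ := by rwa [mem_maximalIdeal, mem_nonunits_iff]
      rw [hϖ, Ideal.mem_span_singleton'] at hwm
      obtain ⟨w', hw'⟩ := hwm
      rw [hϖ, pow_two, Ideal.span_singleton_mul_span_singleton, Ideal.mem_span_singleton']
      exact ⟨w', by rw [← hw, ← hw']; ring⟩
    rw [hϖ, ← hw, ← Ideal.span_singleton_mul_left_unit hwu ϖ]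
  intro a ha
  have hal : algebraMap A Aₘ a ∈ Ideal.span {algebraMap A Aₘ π} := by
    rw [← hgen]
    exact (IsLocalization.AtPrime.to_map_mem_maximal_iff Aₘ m a).mpr ha
  obtain ⟨r, hr⟩ := Ideal.mem_span_singleton'.mp hal
  obtain ⟨v, u, hvu⟩ := IsLocalization.exists_mk'_eq m.primeCompl r
  have heq : algebraMap A Aₘ (↑u * a) = algebraMap A Aₘ (π * v) := by
    rw [map_mul, map_mul, ← hr, ← hvu, ← mul_assoc, IsLocalization.mk'_spec', mul_comm]
  obtain ⟨c, hc⟩ := (IsLocalization.eq_iff_exists m.primeCompl Aₘ).mp heq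
  refine ⟨↑c * ↑u, fun hmem => ?_, ↑c * v, by linear_combination hc⟩
  exact (c * u).2 hmem

lemma aux_reg {B : Type*} [CommRing B] (S : Submonoid B) (R : Type*) [CommRing R] [Algebra B R]
    [IsLocalization S R] {x : B} (hx : x ∈ nonZeroDivisors B) :
    algebraMap B R x ∈ nonZeroDivisors R := by
  refine mem_nonZeroDivisors_iff_right.mpr fun r hr => ?_
  obtain ⟨v, u, rfl⟩ := IsLocalization.exists_mk'_eq S r
  rw [IsLocalization.mk'_eq_zero_iff]
  have h1 : algebraMap B R (v * x) = 0 := by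
    have := congrArg (fun w => algebraMap B R u * w) hr
    simp only [mul_zero] at this
    rw [← mul_assoc, IsLocalization.mk'_spec', ← map_mul] at this
    exact this
  obtain ⟨c, hc⟩ := (IsLocalization.map_eq_zero_iff S R _).mp h1
  refine ⟨c, ?_⟩
  exact (mem_nonZeroDivisors_iff_right.mp hx) _ (by linear_combination hc)

variable {A : Type*} [CommRing A] [IsDomain A]

lemma aux_monic (s2 : A) : (X ^ 2 - C s2 : A[X]).Monic :=
  monic_X_pow_sub_C s2 two_ne_zero

lemma aux_repr (s2 : A) (y : AdjoinRoot (X ^ 2 - C s2 : A[X])) :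
    ∃ a b : A, y = algebraMap A _ a + algebraMap A _ b * AdjoinRoot.root _ := by
  obtain ⟨p, rfl⟩ := AdjoinRoot.mk_surjective y
  set f : A[X] := X ^ 2 - C s2 with hf
  have hmonic := aux_monic s2
  have hmod : AdjoinRoot.mk f (p %ₘ f) = AdjoinRoot.mk f p := by
    conv_rhs => rw [← modByMonic_add_div p f]
    rw [map_add, map_mul, AdjoinRoot.mk_self, zero_mul, add_zero]
  have hdeg : (p %ₘ f).degree ≤ 1 := by
    have h2 := degree_modByMonic_lt p hmonic
    rw [degree_X_pow_sub_C (by norm_num) s2] at h2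
    by_contra hc
    push_neg at hc
    have h3 := Nat.WithBot.add_one_le_of_lt hc
    rw [show ((1:WithBot ℕ) + 1) = 2 by norm_num] at h3
    exact absurd h2 (not_lt.mpr h3)
  refine ⟨(p %ₘ f).coeff 0, (p %ₘ f).coeff 1, ?_⟩
  rw [← hmod]
  conv_lhs => rw [eq_X_add_C_of_degree_le_one hdeg]
  rw [map_add, map_mul, AdjoinRoot.mk_C, AdjoinRoot.mk_C, AdjoinRoot.mk_X,
    AdjoinRoot.algebraMap_eq, add_comm]

lemma aux_unique (s2 : A) {a b : A}
    (h : algebraMap A (AdjoinRoot (X ^ 2 - C s2 : A[X])) a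
      + algebraMap A _ b * AdjoinRoot.root _ = 0) : a = 0 ∧ b = 0 := by
  set f : A[X] := X ^ 2 - C s2 with hf
  have hmk : AdjoinRoot.mk f (C a + C b * X) = 0 := by
    rw [map_add, map_mul, AdjoinRoot.mk_C, AdjoinRoot.mk_C, AdjoinRoot.mk_X]
    rw [AdjoinRoot.algebraMap_eq] at h
    exact_mod_cast h
  rw [AdjoinRoot.mk_eq_zero] at hmk
  have hp0 : (C a + C b * X : A[X]) = 0 := by
    refine eq_zero_of_dvd_of_degree_lt hmk ?_
    rw [hf, degree_X_pow_sub_C (by norm_num) s2]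
    calc (C a + C b * X : A[X]).degree = (C b * X + C a : A[X]).degree := by rw [add_comm]
      _ ≤ 1 := degree_linear_le
      _ < 2 := by norm_num
  constructor
  · have := congrArg (fun q : A[X] => q.coeff 0) hp0
    simpa using this
  · have := congrArg (fun q : A[X] => q.coeff 1) hp0
    simpa using this
end Aux

set_option maxHeartbeats 2000000 in
/-- The spectral curve `z² = s2(x)` is smooth where `s2` has only simple
zeros: if `A` is a Dedekind domain (not a field, e.g. the coordinate ring of a
smooth affine curve over ℂ) in which `2` is invertible, `s2 ≠ 0`, and
`s2 ∉ m²` for every maximal ideal `m` containing `s2` (only simple zeros),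
then `B = A[z]/(z² − s2)` is regular: its localization at every maximal ideal
is a discrete valuation ring (in particular a domain). -/
theorem stmt19 (A : Type*) [CommRing A] [IsDomain A] [IsDedekindDomain A]
    (hA : ¬ IsField A) [Invertible (2 : A)] (s2 : A) (hs2 : s2 ≠ 0)
    (hsimple : ∀ m : Ideal A, m.IsMaximal → s2 ∈ m → s2 ∉ m ^ 2) :
    ∀ (M : Ideal (AdjoinRoot (X ^ 2 - C s2 : A[X]))) (hM : M.IsMaximal),
      letI : M.IsPrime := hM.isPrime
      ∃ hdom : IsDomain (Localization.AtPrime M),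
        letI := hdom
        IsDiscreteValuationRing (Localization.AtPrime M) := by
  intro M hM
  letI : M.IsPrime := hM.isPrime
  classical
  have hmonic : (X ^ 2 - C s2 : A[X]).Monic := aux_monic s2
  haveI hNB : IsNoetherianRing (AdjoinRoot (X ^ 2 - C s2 : A[X])) :=
    isNoetherianRing_of_surjective A[X] _ (AdjoinRoot.mk _) AdjoinRoot.mk_surjective
  haveI : IsNoetherianRing (Localization.AtPrime M) :=
    IsLocalization.isNoetherianRing M.primeCompl _ hNB
  haveI : Module.Finite A (AdjoinRoot (X ^ 2 - C s2 : A[X])) :=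
    Module.Finite.of_basis (AdjoinRoot.powerBasis' hmonic).basis
  haveI : Algebra.IsIntegral A (AdjoinRoot (X ^ 2 - C s2 : A[X])) := Algebra.IsIntegral.of_finite A _
  haveI hmmax : (M.comap (algebraMap A (AdjoinRoot (X ^ 2 - C s2 : A[X])))).IsMaximal :=
    Ideal.isMaximal_comap_of_isIntegral_of_isMaximal M
  haveI : (M.comap (algebraMap A (AdjoinRoot (X ^ 2 - C s2 : A[X])))).IsPrime := hmmax.isPrime
  have hz2 : (AdjoinRoot.root (X ^ 2 - C s2 : A[X])) ^ 2 = (algebraMap A (AdjoinRoot (X ^ 2 - C s2 : A[X]))) s2 := by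
    have h0 : (AdjoinRoot.mk (X ^ 2 - C s2 : A[X])) (X ^ 2 - C s2) = 0 := AdjoinRoot.mk_self
    rw [map_sub, map_pow, AdjoinRoot.mk_X, AdjoinRoot.mk_C, sub_eq_zero] at h0
    rw [AdjoinRoot.algebraMap_eq]
    exact h0
  have hunit : ∀ u : A, u ∉ M.comap (algebraMap A (AdjoinRoot (X ^ 2 - C s2 : A[X]))) → IsUnit ((algebraMap (AdjoinRoot (X ^ 2 - C s2 : A[X])) (Localization.AtPrime M)) ((algebraMap A (AdjoinRoot (X ^ 2 - C s2 : A[X]))) u)) := by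
    intro u hu
    exact IsLocalization.map_units (M := M.primeCompl) (Localization.AtPrime M) ⟨(algebraMap A (AdjoinRoot (X ^ 2 - C s2 : A[X]))) u, hu⟩
  have hmap_max : Ideal.map (algebraMap (AdjoinRoot (X ^ 2 - C s2 : A[X])) (Localization.AtPrime M)) M = IsLocalRing.maximalIdeal (Localization.AtPrime M) :=
    Localization.AtPrime.map_eq_maximalIdeal
  have hspan_of_div : ∀ π : A,
      (∀ a ∈ M.comap (algebraMap A (AdjoinRoot (X ^ 2 - C s2 : A[X]))), ∃ u ∉ M.comap (algebraMap A (AdjoinRoot (X ^ 2 - C s2 : A[X]))), ∃ v, u * a = π * v) →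
      ∀ a ∈ M.comap (algebraMap A (AdjoinRoot (X ^ 2 - C s2 : A[X]))), (algebraMap (AdjoinRoot (X ^ 2 - C s2 : A[X])) (Localization.AtPrime M)) ((algebraMap A (AdjoinRoot (X ^ 2 - C s2 : A[X]))) a) ∈ Ideal.span {(algebraMap (AdjoinRoot (X ^ 2 - C s2 : A[X])) (Localization.AtPrime M)) ((algebraMap A (AdjoinRoot (X ^ 2 - C s2 : A[X]))) π)} := by
    intro π hdiv a ha
    obtain ⟨u, hu, v, huv⟩ := hdiv a ha
    obtain ⟨w, hw⟩ := isUnit_iff_exists_inv.mp (hunit u hu)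
    have hkey : (algebraMap (AdjoinRoot (X ^ 2 - C s2 : A[X])) (Localization.AtPrime M)) ((algebraMap A (AdjoinRoot (X ^ 2 - C s2 : A[X]))) u) * (algebraMap (AdjoinRoot (X ^ 2 - C s2 : A[X])) (Localization.AtPrime M)) ((algebraMap A (AdjoinRoot (X ^ 2 - C s2 : A[X]))) a) = (algebraMap (AdjoinRoot (X ^ 2 - C s2 : A[X])) (Localization.AtPrime M)) ((algebraMap A (AdjoinRoot (X ^ 2 - C s2 : A[X]))) π) * (algebraMap (AdjoinRoot (X ^ 2 - C s2 : A[X])) (Localization.AtPrime M)) ((algebraMap A (AdjoinRoot (X ^ 2 - C s2 : A[X]))) v) := by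
      rw [← map_mul, ← map_mul, ← map_mul, ← map_mul, huv]
    rw [Ideal.mem_span_singleton']
    refine ⟨w * (algebraMap (AdjoinRoot (X ^ 2 - C s2 : A[X])) (Localization.AtPrime M)) ((algebraMap A (AdjoinRoot (X ^ 2 - C s2 : A[X]))) v), ?_⟩
    calc (w * (algebraMap (AdjoinRoot (X ^ 2 - C s2 : A[X])) (Localization.AtPrime M)) ((algebraMap A (AdjoinRoot (X ^ 2 - C s2 : A[X]))) v)) * (algebraMap (AdjoinRoot (X ^ 2 - C s2 : A[X])) (Localization.AtPrime M)) ((algebraMap A (AdjoinRoot (X ^ 2 - C s2 : A[X]))) π) = w * ((algebraMap (AdjoinRoot (X ^ 2 - C s2 : A[X])) (Localization.AtPrime M)) ((algebraMap A (AdjoinRoot (X ^ 2 - C s2 : A[X]))) π) * (algebraMap (AdjoinRoot (X ^ 2 - C s2 : A[X])) (Localization.AtPrime M)) ((algebraMap A (AdjoinRoot (X ^ 2 - C s2 : A[X]))) v)) := by ring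
      _ = w * ((algebraMap (AdjoinRoot (X ^ 2 - C s2 : A[X])) (Localization.AtPrime M)) ((algebraMap A (AdjoinRoot (X ^ 2 - C s2 : A[X]))) u) * (algebraMap (AdjoinRoot (X ^ 2 - C s2 : A[X])) (Localization.AtPrime M)) ((algebraMap A (AdjoinRoot (X ^ 2 - C s2 : A[X]))) a)) := by rw [hkey]
      _ = (w * (algebraMap (AdjoinRoot (X ^ 2 - C s2 : A[X])) (Localization.AtPrime M)) ((algebraMap A (AdjoinRoot (X ^ 2 - C s2 : A[X]))) u)) * (algebraMap (AdjoinRoot (X ^ 2 - C s2 : A[X])) (Localization.AtPrime M)) ((algebraMap A (AdjoinRoot (X ^ 2 - C s2 : A[X]))) a) := by ring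
      _ = (algebraMap (AdjoinRoot (X ^ 2 - C s2 : A[X])) (Localization.AtPrime M)) ((algebraMap A (AdjoinRoot (X ^ 2 - C s2 : A[X]))) a) := by rw [mul_comm w, hw, one_mul]
  by_cases hs2m : s2 ∈ M.comap (algebraMap A (AdjoinRoot (X ^ 2 - C s2 : A[X])))
  · -- s2 vanishes at the point below M : generator is z
    have hzM : (AdjoinRoot.root (X ^ 2 - C s2 : A[X])) ∈ M := hM.isPrime.mem_of_pow_mem 2 (by rw [hz2]; exact hs2m)
    have hdiv := aux_loc hA hmmax hs2m (hsimple _ hmmax hs2m)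
    have hreg : (algebraMap (AdjoinRoot (X ^ 2 - C s2 : A[X])) (Localization.AtPrime M)) (AdjoinRoot.root (X ^ 2 - C s2 : A[X])) ∈ nonZeroDivisors (Localization.AtPrime M) := by
      apply aux_reg M.primeCompl
      refine mem_nonZeroDivisors_iff_right.mpr fun y hy => ?_
      obtain ⟨a, b, rfl⟩ := aux_repr s2 y
      have hcalc : (algebraMap A (AdjoinRoot (X ^ 2 - C s2 : A[X]))) (b * s2) + (algebraMap A (AdjoinRoot (X ^ 2 - C s2 : A[X]))) a * (AdjoinRoot.root (X ^ 2 - C s2 : A[X])) = 0 := by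
        rw [map_mul]
        calc (algebraMap A (AdjoinRoot (X ^ 2 - C s2 : A[X]))) b * (algebraMap A (AdjoinRoot (X ^ 2 - C s2 : A[X]))) s2 + (algebraMap A (AdjoinRoot (X ^ 2 - C s2 : A[X]))) a * (AdjoinRoot.root (X ^ 2 - C s2 : A[X]))
            = ((algebraMap A (AdjoinRoot (X ^ 2 - C s2 : A[X]))) a + (algebraMap A (AdjoinRoot (X ^ 2 - C s2 : A[X]))) b * (AdjoinRoot.root (X ^ 2 - C s2 : A[X]))) * (AdjoinRoot.root (X ^ 2 - C s2 : A[X])) - (algebraMap A (AdjoinRoot (X ^ 2 - C s2 : A[X]))) b * ((AdjoinRoot.root (X ^ 2 - C s2 : A[X])) ^ 2 - (algebraMap A (AdjoinRoot (X ^ 2 - C s2 : A[X]))) s2) := by ring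
          _ = 0 := by rw [hy, hz2]; ring
      obtain ⟨h1, h2⟩ := aux_unique s2 hcalc
      have hb : b = 0 := by
        rcases mul_eq_zero.mp h1 with h | h
        · exact h
        · exact absurd h hs2
      rw [h2, hb]
      simp
    have hspan : IsLocalRing.maximalIdeal (Localization.AtPrime M) = Ideal.span {(algebraMap (AdjoinRoot (X ^ 2 - C s2 : A[X])) (Localization.AtPrime M)) (AdjoinRoot.root (X ^ 2 - C s2 : A[X]))} := by
      apply le_antisymm
      · rw [← hmap_max, Ideal.map_le_iff_le_comap]
        intro y hy
        rw [Ideal.mem_comap]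
        obtain ⟨a, b, rfl⟩ := aux_repr s2 y
        have haM : (algebraMap A (AdjoinRoot (X ^ 2 - C s2 : A[X]))) a ∈ M := by
          have heq : (algebraMap A (AdjoinRoot (X ^ 2 - C s2 : A[X]))) a = ((algebraMap A (AdjoinRoot (X ^ 2 - C s2 : A[X]))) a + (algebraMap A (AdjoinRoot (X ^ 2 - C s2 : A[X]))) b * (AdjoinRoot.root (X ^ 2 - C s2 : A[X]))) - (algebraMap A (AdjoinRoot (X ^ 2 - C s2 : A[X]))) b * (AdjoinRoot.root (X ^ 2 - C s2 : A[X])) := by ring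
          rw [heq]
          exact Ideal.sub_mem M hy (Ideal.mul_mem_left M _ hzM)
        have ham : a ∈ M.comap (algebraMap A (AdjoinRoot (X ^ 2 - C s2 : A[X]))) := Ideal.mem_comap.mpr haM
        have h1 : (algebraMap (AdjoinRoot (X ^ 2 - C s2 : A[X])) (Localization.AtPrime M)) ((algebraMap A (AdjoinRoot (X ^ 2 - C s2 : A[X]))) a) ∈ Ideal.span {(algebraMap (AdjoinRoot (X ^ 2 - C s2 : A[X])) (Localization.AtPrime M)) (AdjoinRoot.root (X ^ 2 - C s2 : A[X]))} := by
          refine (Ideal.span_singleton_le_span_singleton.mpr ⟨(algebraMap (AdjoinRoot (X ^ 2 - C s2 : A[X])) (Localization.AtPrime M)) (AdjoinRoot.root (X ^ 2 - C s2 : A[X])), ?_⟩)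
            (hspan_of_div s2 hdiv a ham)
          rw [← map_mul, ← pow_two, hz2]
        rw [map_add, map_mul]
        exact Ideal.add_mem _ h1 (Ideal.mul_mem_left _ _ (Ideal.subset_span rfl))
      · rw [Ideal.span_le, ← hmap_max]
        intro x hx
        simp only [Set.mem_singleton_iff] at hx
        subst hx
        exact Ideal.mem_map_of_mem _ hzM
    exact aux_dvr hreg hspan
  · -- s2 is a unit at the point below M : generator is a uniformizer π of A at m
    obtain ⟨π, hπm, hπ2⟩ := SetLike.exists_of_lt
      (Ideal.pow_lt_self (M.comap (algebraMap A (AdjoinRoot (X ^ 2 - C s2 : A[X]))))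
        (Ring.ne_bot_of_isMaximal_of_not_isField hmmax hA) hmmax.ne_top 2 le_rfl)
    have hdiv := aux_loc hA hmmax hπm hπ2
    have hπ0 : π ≠ 0 := fun h => hπ2 (h ▸ Ideal.zero_mem _)
    have hreg : (algebraMap (AdjoinRoot (X ^ 2 - C s2 : A[X])) (Localization.AtPrime M)) ((algebraMap A (AdjoinRoot (X ^ 2 - C s2 : A[X]))) π) ∈ nonZeroDivisors (Localization.AtPrime M) := by
      apply aux_reg M.primeCompl
      refine mem_nonZeroDivisors_iff_right.mpr fun y hy => ?_
      obtain ⟨a, b, rfl⟩ := aux_repr s2 y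
      have hcalc : (algebraMap A (AdjoinRoot (X ^ 2 - C s2 : A[X]))) (π * a) + (algebraMap A (AdjoinRoot (X ^ 2 - C s2 : A[X]))) (π * b) * (AdjoinRoot.root (X ^ 2 - C s2 : A[X])) = 0 := by
        rw [map_mul, map_mul]
        calc (algebraMap A (AdjoinRoot (X ^ 2 - C s2 : A[X]))) π * (algebraMap A (AdjoinRoot (X ^ 2 - C s2 : A[X]))) a + (algebraMap A (AdjoinRoot (X ^ 2 - C s2 : A[X]))) π * (algebraMap A (AdjoinRoot (X ^ 2 - C s2 : A[X]))) b * (AdjoinRoot.root (X ^ 2 - C s2 : A[X]))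
            = ((algebraMap A (AdjoinRoot (X ^ 2 - C s2 : A[X]))) a + (algebraMap A (AdjoinRoot (X ^ 2 - C s2 : A[X]))) b * (AdjoinRoot.root (X ^ 2 - C s2 : A[X]))) * (algebraMap A (AdjoinRoot (X ^ 2 - C s2 : A[X]))) π := by ring
          _ = 0 := hy
      obtain ⟨h1, h2⟩ := aux_unique s2 hcalc
      have ha0 : a = 0 := by
        rcases mul_eq_zero.mp h1 with h | h
        · exact absurd h hπ0
        · exact h
      have hb0 : b = 0 := by
        rcases mul_eq_zero.mp h2 with h | h
        · exact absurd h hπ0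
        · exact h
      rw [ha0, hb0]
      simp
    have hkey : ∀ y ∈ M, (algebraMap (AdjoinRoot (X ^ 2 - C s2 : A[X])) (Localization.AtPrime M)) y ∈ Ideal.span {(algebraMap (AdjoinRoot (X ^ 2 - C s2 : A[X])) (Localization.AtPrime M)) ((algebraMap A (AdjoinRoot (X ^ 2 - C s2 : A[X]))) π)} := by
      by_cases hc : ∃ c : A, c * c - s2 ∈ M.comap (algebraMap A (AdjoinRoot (X ^ 2 - C s2 : A[X]))) ∧ (AdjoinRoot.root (X ^ 2 - C s2 : A[X])) - (algebraMap A (AdjoinRoot (X ^ 2 - C s2 : A[X]))) c ∈ M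
      · obtain ⟨c, hcm, hzc⟩ := hc
        have hcnm : c ∉ M.comap (algebraMap A (AdjoinRoot (X ^ 2 - C s2 : A[X]))) := by
          intro h
          apply hs2m
          have hmem := Ideal.sub_mem _ (Ideal.mul_mem_left _ c h) hcm
          simpa using hmem
        have hzpc : (AdjoinRoot.root (X ^ 2 - C s2 : A[X])) + (algebraMap A (AdjoinRoot (X ^ 2 - C s2 : A[X]))) c ∉ M := by
          intro h
          have h2c : (algebraMap A (AdjoinRoot (X ^ 2 - C s2 : A[X]))) (c + c) ∈ M := by
            have heq : (algebraMap A (AdjoinRoot (X ^ 2 - C s2 : A[X]))) (c + c) = ((AdjoinRoot.root (X ^ 2 - C s2 : A[X])) + (algebraMap A (AdjoinRoot (X ^ 2 - C s2 : A[X]))) c) - ((AdjoinRoot.root (X ^ 2 - C s2 : A[X])) - (algebraMap A (AdjoinRoot (X ^ 2 - C s2 : A[X]))) c) := by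
              rw [map_add]; ring
            rw [heq]
            exact Ideal.sub_mem M h hzc
          have hcm2 : (2 : A) * c ∈ M.comap (algebraMap A (AdjoinRoot (X ^ 2 - C s2 : A[X]))) := by
            rw [two_mul]
            exact Ideal.mem_comap.mpr h2c
          rcases hmmax.isPrime.mem_or_mem hcm2 with h | h
          · exact hmmax.ne_top (Ideal.eq_top_of_isUnit_mem _ h (isUnit_of_invertible (2 : A)))
          · exact hcnm h
        have hzcspan : (algebraMap (AdjoinRoot (X ^ 2 - C s2 : A[X])) (Localization.AtPrime M)) ((AdjoinRoot.root (X ^ 2 - C s2 : A[X])) - (algebraMap A (AdjoinRoot (X ^ 2 - C s2 : A[X]))) c) ∈ Ideal.span {(algebraMap (AdjoinRoot (X ^ 2 - C s2 : A[X])) (Localization.AtPrime M)) ((algebraMap A (AdjoinRoot (X ^ 2 - C s2 : A[X]))) π)} := by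
          have hmul : ((AdjoinRoot.root (X ^ 2 - C s2 : A[X])) - (algebraMap A (AdjoinRoot (X ^ 2 - C s2 : A[X]))) c) * ((AdjoinRoot.root (X ^ 2 - C s2 : A[X])) + (algebraMap A (AdjoinRoot (X ^ 2 - C s2 : A[X]))) c) = (algebraMap A (AdjoinRoot (X ^ 2 - C s2 : A[X]))) (s2 - c * c) := by
            rw [map_sub, map_mul]
            calc ((AdjoinRoot.root (X ^ 2 - C s2 : A[X])) - (algebraMap A (AdjoinRoot (X ^ 2 - C s2 : A[X]))) c) * ((AdjoinRoot.root (X ^ 2 - C s2 : A[X])) + (algebraMap A (AdjoinRoot (X ^ 2 - C s2 : A[X]))) c)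
                = (AdjoinRoot.root (X ^ 2 - C s2 : A[X])) ^ 2 - (algebraMap A (AdjoinRoot (X ^ 2 - C s2 : A[X]))) c * (algebraMap A (AdjoinRoot (X ^ 2 - C s2 : A[X]))) c := by ring
              _ = (algebraMap A (AdjoinRoot (X ^ 2 - C s2 : A[X]))) s2 - (algebraMap A (AdjoinRoot (X ^ 2 - C s2 : A[X]))) c * (algebraMap A (AdjoinRoot (X ^ 2 - C s2 : A[X]))) c := by rw [hz2]
          have hscm : s2 - c * c ∈ M.comap (algebraMap A (AdjoinRoot (X ^ 2 - C s2 : A[X]))) := by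
            have := neg_mem hcm
            simpa using this
          have h1 : (algebraMap (AdjoinRoot (X ^ 2 - C s2 : A[X])) (Localization.AtPrime M)) ((AdjoinRoot.root (X ^ 2 - C s2 : A[X])) - (algebraMap A (AdjoinRoot (X ^ 2 - C s2 : A[X]))) c) * (algebraMap (AdjoinRoot (X ^ 2 - C s2 : A[X])) (Localization.AtPrime M)) ((AdjoinRoot.root (X ^ 2 - C s2 : A[X])) + (algebraMap A (AdjoinRoot (X ^ 2 - C s2 : A[X]))) c) = (algebraMap (AdjoinRoot (X ^ 2 - C s2 : A[X])) (Localization.AtPrime M)) ((algebraMap A (AdjoinRoot (X ^ 2 - C s2 : A[X]))) (s2 - c * c)) := by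
            rw [← map_mul, hmul]
          obtain ⟨w, hw⟩ := isUnit_iff_exists_inv.mp
            (IsLocalization.map_units (M := M.primeCompl) (Localization.AtPrime M) ⟨(AdjoinRoot.root (X ^ 2 - C s2 : A[X])) + (algebraMap A (AdjoinRoot (X ^ 2 - C s2 : A[X]))) c, hzpc⟩)
          have h2 := hspan_of_div π hdiv _ hscm
          rw [Ideal.mem_span_singleton'] at h2 ⊢
          obtain ⟨e, he⟩ := h2
          refine ⟨e * w, ?_⟩
          calc e * w * (algebraMap (AdjoinRoot (X ^ 2 - C s2 : A[X])) (Localization.AtPrime M)) ((algebraMap A (AdjoinRoot (X ^ 2 - C s2 : A[X]))) π) = (e * (algebraMap (AdjoinRoot (X ^ 2 - C s2 : A[X])) (Localization.AtPrime M)) ((algebraMap A (AdjoinRoot (X ^ 2 - C s2 : A[X]))) π)) * w := by ring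
            _ = (algebraMap (AdjoinRoot (X ^ 2 - C s2 : A[X])) (Localization.AtPrime M)) ((algebraMap A (AdjoinRoot (X ^ 2 - C s2 : A[X]))) (s2 - c * c)) * w := by rw [he]
            _ = ((algebraMap (AdjoinRoot (X ^ 2 - C s2 : A[X])) (Localization.AtPrime M)) ((AdjoinRoot.root (X ^ 2 - C s2 : A[X])) - (algebraMap A (AdjoinRoot (X ^ 2 - C s2 : A[X]))) c) * (algebraMap (AdjoinRoot (X ^ 2 - C s2 : A[X])) (Localization.AtPrime M)) ((AdjoinRoot.root (X ^ 2 - C s2 : A[X])) + (algebraMap A (AdjoinRoot (X ^ 2 - C s2 : A[X]))) c)) * w := by rw [h1]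
            _ = (algebraMap (AdjoinRoot (X ^ 2 - C s2 : A[X])) (Localization.AtPrime M)) ((AdjoinRoot.root (X ^ 2 - C s2 : A[X])) - (algebraMap A (AdjoinRoot (X ^ 2 - C s2 : A[X]))) c) * ((algebraMap (AdjoinRoot (X ^ 2 - C s2 : A[X])) (Localization.AtPrime M)) ((AdjoinRoot.root (X ^ 2 - C s2 : A[X])) + (algebraMap A (AdjoinRoot (X ^ 2 - C s2 : A[X]))) c) * w) := by ring
            _ = (algebraMap (AdjoinRoot (X ^ 2 - C s2 : A[X])) (Localization.AtPrime M)) ((AdjoinRoot.root (X ^ 2 - C s2 : A[X])) - (algebraMap A (AdjoinRoot (X ^ 2 - C s2 : A[X]))) c) := by rw [hw, mul_one]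
        intro y hy
        obtain ⟨a, b, rfl⟩ := aux_repr s2 y
        have habc : a + b * c ∈ M.comap (algebraMap A (AdjoinRoot (X ^ 2 - C s2 : A[X]))) := by
          rw [Ideal.mem_comap]
          have heq : (algebraMap A (AdjoinRoot (X ^ 2 - C s2 : A[X]))) (a + b * c) = ((algebraMap A (AdjoinRoot (X ^ 2 - C s2 : A[X]))) a + (algebraMap A (AdjoinRoot (X ^ 2 - C s2 : A[X]))) b * (AdjoinRoot.root (X ^ 2 - C s2 : A[X]))) - (algebraMap A (AdjoinRoot (X ^ 2 - C s2 : A[X]))) b * ((AdjoinRoot.root (X ^ 2 - C s2 : A[X])) - (algebraMap A (AdjoinRoot (X ^ 2 - C s2 : A[X]))) c) := by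
            rw [map_add, map_mul]; ring
          rw [heq]
          exact Ideal.sub_mem M hy (Ideal.mul_mem_left M _ hzc)
        have hsplit : (algebraMap (AdjoinRoot (X ^ 2 - C s2 : A[X])) (Localization.AtPrime M)) ((algebraMap A (AdjoinRoot (X ^ 2 - C s2 : A[X]))) a + (algebraMap A (AdjoinRoot (X ^ 2 - C s2 : A[X]))) b * (AdjoinRoot.root (X ^ 2 - C s2 : A[X])))
            = (algebraMap (AdjoinRoot (X ^ 2 - C s2 : A[X])) (Localization.AtPrime M)) ((algebraMap A (AdjoinRoot (X ^ 2 - C s2 : A[X]))) (a + b * c)) + (algebraMap (AdjoinRoot (X ^ 2 - C s2 : A[X])) (Localization.AtPrime M)) ((algebraMap A (AdjoinRoot (X ^ 2 - C s2 : A[X]))) b) * (algebraMap (AdjoinRoot (X ^ 2 - C s2 : A[X])) (Localization.AtPrime M)) ((AdjoinRoot.root (X ^ 2 - C s2 : A[X])) - (algebraMap A (AdjoinRoot (X ^ 2 - C s2 : A[X]))) c) := by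
          rw [← map_mul, ← map_add]
          congr 1
          rw [map_add, map_mul]
          ring
        rw [hsplit]
        exact Ideal.add_mem _ (hspan_of_div π hdiv _ habc)
          (Ideal.mul_mem_left _ _ hzcspan)
      · intro y hy
        obtain ⟨a, b, rfl⟩ := aux_repr s2 y
        have hab : a * a - b * b * s2 ∈ M.comap (algebraMap A (AdjoinRoot (X ^ 2 - C s2 : A[X]))) := by
          rw [Ideal.mem_comap]
          have heq : (algebraMap A (AdjoinRoot (X ^ 2 - C s2 : A[X]))) (a * a - b * b * s2)
              = ((algebraMap A (AdjoinRoot (X ^ 2 - C s2 : A[X]))) a + (algebraMap A (AdjoinRoot (X ^ 2 - C s2 : A[X]))) b * (AdjoinRoot.root (X ^ 2 - C s2 : A[X]))) * ((algebraMap A (AdjoinRoot (X ^ 2 - C s2 : A[X]))) a - (algebraMap A (AdjoinRoot (X ^ 2 - C s2 : A[X]))) b * (AdjoinRoot.root (X ^ 2 - C s2 : A[X])))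
                + (algebraMap A (AdjoinRoot (X ^ 2 - C s2 : A[X]))) b * (algebraMap A (AdjoinRoot (X ^ 2 - C s2 : A[X]))) b * ((AdjoinRoot.root (X ^ 2 - C s2 : A[X])) ^ 2 - (algebraMap A (AdjoinRoot (X ^ 2 - C s2 : A[X]))) s2) := by
            rw [map_sub, map_mul, map_mul, map_mul]; ring
          rw [heq, hz2, sub_self, mul_zero, add_zero]
          exact Ideal.mul_mem_right _ M hy
        have hbm : b ∈ M.comap (algebraMap A (AdjoinRoot (X ^ 2 - C s2 : A[X]))) := by
          by_contra hb
          obtain ⟨b', i, him, hbb'⟩ := hmmax.exists_inv hb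
          have hcs : a * b' * (a * b') - s2 ∈ M.comap (algebraMap A (AdjoinRoot (X ^ 2 - C s2 : A[X]))) := by
            have hexp : a * b' * (a * b') - s2
                = b' * b' * (a * a - b * b * s2) + s2 * ((b' * b) * (b' * b) - 1) := by ring
            rw [hexp]
            apply Ideal.add_mem
            · exact Ideal.mul_mem_left _ _ hab
            · apply Ideal.mul_mem_left
              have h1 : b' * b - 1 ∈ M.comap (algebraMap A (AdjoinRoot (X ^ 2 - C s2 : A[X]))) := by
                have heq1 : b' * b - 1 = -i := by linear_combination hbb'
                rw [heq1]
                exact neg_mem him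
              have hexp2 : (b' * b) * (b' * b) - 1 = (b' * b - 1) * (b' * b + 1) := by ring
              rw [hexp2]
              exact Ideal.mul_mem_right _ _ h1
          have hprod : ((AdjoinRoot.root (X ^ 2 - C s2 : A[X])) - (algebraMap A (AdjoinRoot (X ^ 2 - C s2 : A[X]))) (a * b')) * ((AdjoinRoot.root (X ^ 2 - C s2 : A[X])) + (algebraMap A (AdjoinRoot (X ^ 2 - C s2 : A[X]))) (a * b')) ∈ M := by
            have heq : ((AdjoinRoot.root (X ^ 2 - C s2 : A[X])) - (algebraMap A (AdjoinRoot (X ^ 2 - C s2 : A[X]))) (a * b')) * ((AdjoinRoot.root (X ^ 2 - C s2 : A[X])) + (algebraMap A (AdjoinRoot (X ^ 2 - C s2 : A[X]))) (a * b'))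
                = (algebraMap A (AdjoinRoot (X ^ 2 - C s2 : A[X]))) (s2 - a * b' * (a * b')) + ((AdjoinRoot.root (X ^ 2 - C s2 : A[X])) ^ 2 - (algebraMap A (AdjoinRoot (X ^ 2 - C s2 : A[X]))) s2) := by
              simp only [map_sub, map_mul]; ring
            rw [heq, hz2, sub_self, add_zero]
            have : s2 - a * b' * (a * b') ∈ M.comap (algebraMap A (AdjoinRoot (X ^ 2 - C s2 : A[X]))) := by
              have := neg_mem hcs
              simpa using this
            exact Ideal.mem_comap.mp this
          rcases hM.isPrime.mem_or_mem hprod with h | h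
          · exact hc ⟨a * b', hcs, h⟩
          · refine hc ⟨-(a * b'), by simpa using hcs, ?_⟩
            rw [map_neg, sub_neg_eq_add]
            exact h
        have ham : a ∈ M.comap (algebraMap A (AdjoinRoot (X ^ 2 - C s2 : A[X]))) := by
          have haa : a * a ∈ M.comap (algebraMap A (AdjoinRoot (X ^ 2 - C s2 : A[X]))) := by
            have hbbs : b * b * s2 ∈ M.comap (algebraMap A (AdjoinRoot (X ^ 2 - C s2 : A[X]))) :=
              Ideal.mul_mem_right _ _ (Ideal.mul_mem_left _ _ hbm)
            have heq : a * a = (a * a - b * b * s2) + b * b * s2 := by ring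
            rw [heq]
            exact Ideal.add_mem _ hab hbbs
          rcases hmmax.isPrime.mem_or_mem haa with h | h
          · exact h
          · exact h
        rw [map_add, map_mul]
        exact Ideal.add_mem _ (hspan_of_div π hdiv a ham)
          (Ideal.mul_mem_right _ _ (hspan_of_div π hdiv b hbm))
    have hspan : IsLocalRing.maximalIdeal (Localization.AtPrime M) = Ideal.span {(algebraMap (AdjoinRoot (X ^ 2 - C s2 : A[X])) (Localization.AtPrime M)) ((algebraMap A (AdjoinRoot (X ^ 2 - C s2 : A[X]))) π)} := by
      apply le_antisymm
      · rw [← hmap_max, Ideal.map_le_iff_le_comap]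
        intro y hy
        exact hkey y hy
      · rw [Ideal.span_le, ← hmap_max]
        intro x hx
        simp only [Set.mem_singleton_iff] at hx
        subst hx
        exact Ideal.mem_map_of_mem _ (Ideal.mem_comap.mp hπm)
    exact aux_dvr hreg hspan
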